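/- arXiv:2402.06670 — 4 statements merged into one kernel-verified Lean document; each statement's English description precedes it below -/
import Mathlib

section
/- For real numbers l, a, b with 0 < b ≤ a < l ≤ √(a² + b²), the integral ∫_{0}^{π} min(a, l·|cos φ|)·min(b, l·sin φ) dφ equals 2la + 2lb − (a² + b²) − l². -/
open Real MeasureTheory Filter

/-- `A(l,a) = ∫_0^π min(a, l·|cos φ|) dφ` -/
noncomputable def A2 (l a : ℝ) : ℝ := ∫ φ in (0:ℝ)..π, min a (l * |Real.cos φ|)

/-- `B(l,b) = ∫_0^π min(b, l·sin φ) dφ` -/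
noncomputable def B2 (l b : ℝ) : ℝ := ∫ φ in (0:ℝ)..π, min b (l * Real.sin φ)

/-- `AB(l,a,b) = ∫_0^π min(a, l·|cos φ|)·min(b, l·sin φ) dφ` -/
noncomputable def AB2 (l a b : ℝ) : ℝ :=
  ∫ φ in (0:ℝ)..π, min a (l * |Real.cos φ|) * min b (l * Real.sin φ)

/-- Intersection probability for the 2D Buffon–Laplace needle problem. -/
noncomputable def P2 (l a b : ℝ) : ℝ :=
  (b * A2 l a + a * B2 l b - AB2 l a b) / (π * a * b)

/-- Intersection probability for the 2D spherocylinder Buffon–Laplace problem. -/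
noncomputable def P2sc (l σ a b : ℝ) : ℝ :=
  ((b - σ) * A2 l (a - σ) + (a - σ) * B2 l (b - σ) - AB2 l (a - σ) (b - σ)
    + (σ * a + σ * b - σ ^ 2) * π) / (π * a * b)

/-- `A³ᴰ(l,a) = ∫_0^{π/2} ∫_0^π min(a, l·sin ψ·|cos φ|) dφ dψ` -/
noncomputable def A3 (l a : ℝ) : ℝ :=
  ∫ ψ in (0:ℝ)..(π/2), ∫ φ in (0:ℝ)..π, min a (l * Real.sin ψ * |Real.cos φ|)

/-- `B³ᴰ(l,b) = ∫_0^{π/2} ∫_0^π min(b, l·sin ψ·sin φ) dφ dψ` -/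
noncomputable def B3 (l b : ℝ) : ℝ :=
  ∫ ψ in (0:ℝ)..(π/2), ∫ φ in (0:ℝ)..π, min b (l * Real.sin ψ * Real.sin φ)

/-- `AB³ᴰ(l,a,b) = ∫_0^{π/2} ∫_0^π min(a, l·sin ψ·|cos φ|)·min(b, l·sin ψ·sin φ) dφ dψ` -/
noncomputable def AB3 (l a b : ℝ) : ℝ :=
  ∫ ψ in (0:ℝ)..(π/2), ∫ φ in (0:ℝ)..π,
    min a (l * Real.sin ψ * |Real.cos φ|) * min b (l * Real.sin ψ * Real.sin φ)

/-- `S³ᴰ(l,a,b) = b·A³ᴰ(l,a) + a·B³ᴰ(l,b) − AB³ᴰ(l,a,b)` -/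
noncomputable def S3 (l a b : ℝ) : ℝ := b * A3 l a + a * B3 l b - AB3 l a b

/-- `F(α,β,t) = ∫_α^β √(sin²ψ − t²) dψ` -/
noncomputable def Faux (α β t : ℝ) : ℝ :=
  ∫ ψ in α..β, Real.sqrt (Real.sin ψ ^ 2 - t ^ 2)

/-- `G(α,β,t) = ∫_α^β (π/2 − arcsin(t / sin ψ)) dψ` -/
noncomputable def Gaux (α β t : ℝ) : ℝ :=
  ∫ ψ in α..β, (π / 2 - Real.arcsin (t / Real.sin ψ))

/-!
By the symmetry `φ ↦ π - φ` it suffices to integrate over `[0, π/2]`, where the two minima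
switch branches at `φ_a = arccos (a/l)` and `φ_b = arcsin (b/l)`; the condition
`l ≤ √(a² + b²)` ensures `φ_a ≤ φ_b`. On `[0, φ_a]`, `[φ_a, φ_b]` and `[φ_b, π/2]` the
integrand is `a l sin φ`, `l² sin φ cos φ` and `b l cos φ`, whose integrals are
`a l - a²`, `(a² + b² - l²)/2` and `b l - b²`.
-/

open Set intervalIntegral

theorem integral_eq_two_mul_integral_half_of_symm {f : ℝ → ℝ} {c : ℝ}
    (hf : IntervalIntegrable f volume 0 c) (hsymm : ∀ x, f (c - x) = f x) :
    ∫ x in 0..c, f x = 2 * ∫ x in 0..c / 2, f x := by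
  have hmid : c / 2 ∈ uIcc 0 c := by
    rcases le_total 0 c with hc | hc
    · rw [uIcc_of_le hc]; constructor <;> linarith
    · rw [uIcc_of_ge hc]; constructor <;> linarith
  have hupper : ∫ x in c / 2..c, f x = ∫ x in 0..c / 2, f x := by
    have := integral_comp_sub_left (a := 0) (b := c / 2) f c
    simp only [hsymm, sub_zero, sub_half] at this
    exact this.symm
  rw [← integral_add_adjacent_intervals
    (hf.mono_set (uIcc_subset_uIcc_left hmid)) (hf.mono_set (uIcc_subset_uIcc_right hmid)),
    hupper, two_mul]

section MinBranches

variable {l a x : ℝ}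

theorem div_mem_Icc_neg_one_one (hl : 0 < l) (ha : |a| ≤ l) : a / l ∈ Icc (-1) 1 := by
  rwa [mem_Icc, ← abs_le, abs_div, abs_of_pos hl, div_le_one hl]

theorem min_mul_cos_eq_left (hl : 0 < l) (ha : |a| ≤ l) (hx₀ : 0 ≤ x)
    (hx : x ≤ arccos (a / l)) : min a (l * cos x) = a := by
  refine min_eq_left ?_
  have h := cos_le_cos_of_nonneg_of_le_pi hx₀ (arccos_le_pi _) hx
  rw [cos_arccos (div_mem_Icc_neg_one_one hl ha).1 (div_mem_Icc_neg_one_one hl ha).2,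
    div_le_iff₀ hl] at h
  linarith

theorem min_mul_cos_eq_right (hl : 0 < l) (ha : |a| ≤ l) (hx : arccos (a / l) ≤ x)
    (hxπ : x ≤ π) : min a (l * cos x) = l * cos x := by
  refine min_eq_right ?_
  have h := cos_le_cos_of_nonneg_of_le_pi (arccos_nonneg _) hxπ hx
  rw [cos_arccos (div_mem_Icc_neg_one_one hl ha).1 (div_mem_Icc_neg_one_one hl ha).2,
    le_div_iff₀ hl] at h
  linarith

theorem min_mul_sin_eq_right (hl : 0 < l) (ha : |a| ≤ l) (hx₀ : -(π / 2) ≤ x)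
    (hx : x ≤ arcsin (a / l)) : min a (l * sin x) = l * sin x := by
  refine min_eq_right ?_
  have h := sin_le_sin_of_le_of_le_pi_div_two hx₀ (arcsin_le_pi_div_two _) hx
  rw [sin_arcsin (div_mem_Icc_neg_one_one hl ha).1 (div_mem_Icc_neg_one_one hl ha).2,
    le_div_iff₀ hl] at h
  linarith

theorem min_mul_sin_eq_left (hl : 0 < l) (ha : |a| ≤ l) (hx : arcsin (a / l) ≤ x)
    (hxπ : x ≤ π / 2) : min a (l * sin x) = a := by
  refine min_eq_left ?_
  have h := sin_le_sin_of_le_of_le_pi_div_two (neg_pi_div_two_le_arcsin _) hxπ hx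
  rw [sin_arcsin (div_mem_Icc_neg_one_one hl ha).1 (div_mem_Icc_neg_one_one hl ha).2,
    div_le_iff₀ hl] at h
  linarith

end MinBranches

theorem arccos_div_le_arcsin_div {l a b : ℝ} (hl : 0 < l) (ha : 0 ≤ a) (hb : 0 ≤ b)
    (hlab : l ^ 2 ≤ a ^ 2 + b ^ 2) : arccos (a / l) ≤ arcsin (b / l) := by
  rw [arccos_eq_arcsin (by positivity)]
  refine monotone_arcsin ((sqrt_le_left (by positivity)).2 ?_)
  rw [div_pow, div_pow, sub_le_iff_le_add, ← add_div, le_div_iff₀ (by positivity)]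
  linarith

section QuarterIntegral

variable {l a b : ℝ} (hl : 0 < l) (ha : |a| ≤ l) (hb : |b| ≤ l)
  (hφ : arccos (a / l) ≤ arcsin (b / l))
include hl ha hb hφ

theorem integral_min_mul_min_zero_arccos :
    ∫ x in 0..arccos (a / l), min a (l * cos x) * min b (l * sin x) = a * l - a ^ 2 := by
  have hcongr : EqOn (fun x ↦ min a (l * cos x) * min b (l * sin x)) (fun x ↦ a * l * sin x)
      (uIcc 0 (arccos (a / l))) := by
    intro x hx
    rw [uIcc_of_le (arccos_nonneg _)] at hx
    simp only
    rw [min_mul_cos_eq_left hl ha hx.1 hx.2,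
      min_mul_sin_eq_right hl hb (by linarith [hx.1, pi_pos]) (hx.2.trans hφ)]
    ring
  obtain ⟨ha₁, ha₂⟩ := div_mem_Icc_neg_one_one hl ha
  rw [integral_congr hcongr, intervalIntegral.integral_const_mul, integral_sin, cos_zero, cos_arccos ha₁ ha₂]
  field_simp

theorem integral_min_mul_min_arccos_arcsin :
    ∫ x in arccos (a / l)..arcsin (b / l), min a (l * cos x) * min b (l * sin x)
      = (a ^ 2 + b ^ 2 - l ^ 2) / 2 := by
  have hcongr : EqOn (fun x ↦ min a (l * cos x) * min b (l * sin x))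
      (fun x ↦ l ^ 2 * (sin x * cos x)) (uIcc (arccos (a / l)) (arcsin (b / l))) := by
    intro x hx
    rw [uIcc_of_le hφ] at hx
    simp only
    rw [min_mul_cos_eq_right hl ha hx.1 (by linarith [hx.2, arcsin_le_pi_div_two (b / l), pi_pos]),
      min_mul_sin_eq_right hl hb (by linarith [hx.1, arccos_nonneg (a / l), pi_pos]) hx.2]
    ring
  obtain ⟨ha₁, ha₂⟩ := div_mem_Icc_neg_one_one hl ha
  obtain ⟨hb₁, hb₂⟩ := div_mem_Icc_neg_one_one hl hb
  rw [integral_congr hcongr, intervalIntegral.integral_const_mul, integral_sin_mul_cos₁,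
    sin_arcsin hb₁ hb₂, sin_sq, cos_arccos ha₁ ha₂]
  field_simp
  ring

theorem integral_min_mul_min_arcsin_pi_div_two :
    ∫ x in arcsin (b / l)..π / 2, min a (l * cos x) * min b (l * sin x) = b * l - b ^ 2 := by
  have hcongr : EqOn (fun x ↦ min a (l * cos x) * min b (l * sin x)) (fun x ↦ b * l * cos x)
      (uIcc (arcsin (b / l)) (π / 2)) := by
    intro x hx
    rw [uIcc_of_le (arcsin_le_pi_div_two _)] at hx
    simp only
    rw [min_mul_cos_eq_right hl ha (hφ.trans hx.1) (by linarith [hx.2, pi_pos]),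
      min_mul_sin_eq_left hl hb hx.1 hx.2]
    ring
  obtain ⟨hb₁, hb₂⟩ := div_mem_Icc_neg_one_one hl hb
  rw [integral_congr hcongr, intervalIntegral.integral_const_mul, integral_cos, sin_pi_div_two,
    sin_arcsin hb₁ hb₂]
  field_simp

theorem integral_min_mul_min_zero_pi_div_two :
    ∫ x in 0..π / 2, min a (l * cos x) * min b (l * sin x)
      = (2 * l * a + 2 * l * b - (a ^ 2 + b ^ 2) - l ^ 2) / 2 := by
  have hint : ∀ u v : ℝ,
      IntervalIntegrable (fun x ↦ min a (l * cos x) * min b (l * sin x)) volume u v :=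
    fun u v ↦ (by fun_prop : Continuous _).intervalIntegrable u v
  rw [← integral_add_adjacent_intervals (hint _ _) (hint _ (π / 2)),
    ← integral_add_adjacent_intervals (hint _ _) (hint _ (arcsin (b / l))),
    integral_min_mul_min_zero_arccos hl ha hb hφ, integral_min_mul_min_arccos_arcsin hl ha hb hφ,
    integral_min_mul_min_arcsin_pi_div_two hl ha hb hφ]
  ring

end QuarterIntegral

theorem AB2_eq_two_mul_integral_zero_pi_div_two (l a b : ℝ) :
    AB2 l a b = 2 * ∫ x in 0..π / 2, min a (l * cos x) * min b (l * sin x) := by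
  rw [AB2, integral_eq_two_mul_integral_half_of_symm
    ((by fun_prop : Continuous _).intervalIntegrable _ _) fun x ↦ by
      simp only [sin_pi_sub, cos_pi_sub, abs_neg]]
  congr 1
  refine integral_congr fun x hx ↦ ?_
  rw [uIcc_of_le (by linarith [pi_pos])] at hx
  simp only [abs_of_nonneg (cos_nonneg_of_mem_Icc ⟨by linarith [hx.1, pi_pos], hx.2⟩)]

theorem stmt3 (l a b : ℝ) (hb : 0 < b) (hba : b ≤ a) (hal : a < l)
    (hlL : l ≤ Real.sqrt (a ^ 2 + b ^ 2)) :
    AB2 l a b = 2 * l * a + 2 * l * b - (a ^ 2 + b ^ 2) - l ^ 2 := by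
  have ha : 0 ≤ a := hb.le.trans hba
  have hl : 0 < l := ha.trans_lt hal
  have hlab : l ^ 2 ≤ a ^ 2 + b ^ 2 := (le_sqrt hl.le (by positivity)).1 hlL
  rw [AB2_eq_two_mul_integral_zero_pi_div_two,
    integral_min_mul_min_zero_pi_div_two hl (by rw [abs_of_nonneg ha]; exact hal.le)
      (by rw [abs_of_pos hb]; linarith) (arccos_div_le_arcsin_div hl ha hb.le hlab)]
  ring
end

section
/- For real numbers l, a, b with 0 < b < l ≤ a, the intersection probability P(l,a,b) equals (1/π)·(b/a) + (2/π)·(l/b)·(1 − √(1 − b²/l²)) + (2/π)·(π/2 − arcsin(b/l)). -/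
open Real MeasureTheory Filter

/-!
Every integrand is invariant under `φ ↦ π - φ`, so each integral is twice its value over
`[0, π/2]`, where `|cos φ| = cos φ`. There `l ≤ a` makes `min a (l cos φ) = l cos φ`, and
`min b (l sin φ)` equals `l sin φ` up to `θ = arcsin (b/l)` and `b` after it. The remaining
elementary integrals give `A = 2l`, `B = 2l (1 - cos θ) + b (π - 2θ)` and `AB = 2bl - b²`.
-/

open intervalIntegral Set

theorem integral_zero_pi_eq_two_mul_of_symm {f : ℝ → ℝ}
    (hf : IntervalIntegrable f volume 0 π) (hsymm : ∀ x, f (π - x) = f x) :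
    ∫ x in (0:ℝ)..π, f x = 2 * ∫ x in (0:ℝ)..π / 2, f x := by
  have hπ := pi_pos
  have hsub : ∀ u v, u ∈ uIcc 0 π → v ∈ uIcc 0 π → IntervalIntegrable f volume u v :=
    fun u v hu hv => hf.mono_set (uIcc_subset_uIcc hu hv)
  have hmid : π / 2 ∈ uIcc 0 π := by rw [uIcc_of_le hπ.le]; constructor <;> linarith
  have hupper : ∫ x in π / 2..π, f x = ∫ x in (0:ℝ)..π / 2, f x := by
    rw [integral_congr fun x _ => (hsymm x).symm, integral_comp_sub_left, sub_self, sub_half]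
  rw [← integral_add_adjacent_intervals (hsub 0 _ left_mem_uIcc hmid)
    (hsub _ π hmid right_mem_uIcc), hupper, two_mul]

theorem integral_mul_min_eq_of_le_of_ge {f g : ℝ → ℝ} {b u c v : ℝ}
    (hf : Continuous f) (hg : Continuous g) (huc : u ≤ c) (hcv : c ≤ v)
    (hle : ∀ x ∈ Icc u c, f x ≤ b) (hge : ∀ x ∈ Icc c v, b ≤ f x) :
    ∫ x in u..v, g x * min b (f x) = (∫ x in u..c, g x * f x) + b * ∫ x in c..v, g x := by
  have hint : ∀ s t, IntervalIntegrable (fun x => g x * min b (f x)) volume s t :=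
    fun s t => (hg.mul (continuous_const.min hf)).intervalIntegrable s t
  rw [← integral_add_adjacent_intervals (hint u c) (hint c v),
    ← intervalIntegral.integral_const_mul]
  congr 1 <;> refine integral_congr fun x hx => ?_
  · rw [uIcc_of_le huc] at hx
    simp only [min_eq_right (hle x hx)]
  · rw [uIcc_of_le hcv] at hx
    simp only [min_eq_left (hge x hx)]
    ring

theorem min_mul_abs_cos_eq {l a : ℝ} (hl : 0 ≤ l) (hla : l ≤ a) (φ : ℝ) :
    min a (l * |cos φ|) = l * |cos φ| :=
  min_eq_right <| (mul_le_of_le_one_right hl (abs_cos_le_one φ)).trans hla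

theorem mul_sin_le_of_le_arcsin {l b φ : ℝ} (hl : 0 < l) (hφ : φ ∈ Icc 0 (arcsin (b / l))) :
    l * sin φ ≤ b := by
  have := (le_arcsin_iff_sin_le'
    ⟨by linarith [pi_pos, hφ.1], hφ.2.trans (arcsin_le_pi_div_two _)⟩).1 hφ.2
  rwa [le_div_iff₀ hl, mul_comm] at this

theorem le_mul_sin_of_arcsin_le {l b φ : ℝ} (hl : 0 < l) (hb : 0 ≤ b) (hbl : b ≤ l)
    (hφ : φ ∈ Icc (arcsin (b / l)) (π / 2)) : b ≤ l * sin φ := by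
  have hbl' : b / l ∈ Icc (-1) 1 :=
    ⟨by linarith [div_nonneg hb hl.le], div_le_one_of_le₀ hbl hl.le⟩
  have hθ : 0 ≤ arcsin (b / l) := arcsin_nonneg.2 (div_nonneg hb hl.le)
  have := (arcsin_le_iff_le_sin hbl' ⟨by linarith [pi_pos, hφ.1], hφ.2⟩).1 hφ.1
  rwa [div_le_iff₀ hl, mul_comm] at this

theorem arcsin_mem_Icc_zero_pi_div_two {x : ℝ} (hx : 0 ≤ x) : arcsin x ∈ Icc 0 (π / 2) :=
  ⟨arcsin_nonneg.2 hx, arcsin_le_pi_div_two x⟩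

theorem integral_min_mul_abs_cos_eq {l a : ℝ} (hl : 0 ≤ l) (hla : l ≤ a) {g : ℝ → ℝ}
    (hsymm : ∀ x, g (π - x) = g x) (hg : Continuous g) :
    ∫ x in (0:ℝ)..π, min a (l * |cos x|) * g x
      = 2 * ∫ x in (0:ℝ)..π / 2, l * cos x * g x := by
  rw [integral_zero_pi_eq_two_mul_of_symm
    (Continuous.intervalIntegrable (by fun_prop) _ _)
    (fun x => by rw [cos_pi_sub, abs_neg, hsymm])]
  congr 1
  refine integral_congr fun x hx => ?_
  rw [uIcc_of_le (by linarith [pi_pos])] at hx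
  rw [min_mul_abs_cos_eq hl hla,
    abs_of_nonneg (cos_nonneg_of_mem_Icc ⟨by linarith [pi_pos, hx.1], hx.2⟩)]

theorem A2_eq {l a : ℝ} (hl : 0 ≤ l) (hla : l ≤ a) : A2 l a = 2 * l := by
  have := integral_min_mul_abs_cos_eq hl hla (g := fun _ => 1) (fun _ => rfl) continuous_const
  simp only [mul_one] at this
  rw [A2, this, intervalIntegral.integral_const_mul, integral_cos, sin_pi_div_two, sin_zero]
  ring

theorem B2_eq {l b : ℝ} (hb : 0 ≤ b) (hbl : b ≤ l) (hl : 0 < l) :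
    B2 l b = 2 * l * (1 - √(1 - b ^ 2 / l ^ 2)) + b * (π - 2 * arcsin (b / l)) := by
  have hθ := arcsin_mem_Icc_zero_pi_div_two (div_nonneg hb hl.le)
  have hsplit := integral_mul_min_eq_of_le_of_ge (g := fun _ => 1) (by fun_prop) continuous_const
    hθ.1 hθ.2 (fun _ => mul_sin_le_of_le_arcsin hl) (fun _ => le_mul_sin_of_arcsin_le hl hb hbl)
  simp only [one_mul] at hsplit
  rw [B2, integral_zero_pi_eq_two_mul_of_symm
    (Continuous.intervalIntegrable (by fun_prop) _ _) (fun x => by rw [sin_pi_sub]),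
    hsplit, intervalIntegral.integral_const_mul, integral_sin, intervalIntegral.integral_const,
    cos_zero, cos_arcsin, div_pow]
  simp only [smul_eq_mul, mul_one]
  ring

theorem AB2_eq {l a b : ℝ} (hb : 0 ≤ b) (hbl : b ≤ l) (hl : 0 < l) (hla : l ≤ a) :
    AB2 l a b = 2 * b * l - b ^ 2 := by
  have hθ := arcsin_mem_Icc_zero_pi_div_two (div_nonneg hb hl.le)
  have hsplit := integral_mul_min_eq_of_le_of_ge (g := fun x => l * cos x) (by fun_prop)
    (by fun_prop) hθ.1 hθ.2 (fun _ => mul_sin_le_of_le_arcsin hl)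
    (fun _ => le_mul_sin_of_arcsin_le hl hb hbl)
  have hsin : sin (arcsin (b / l)) = b / l :=
    sin_arcsin (by linarith [div_nonneg hb hl.le]) (div_le_one_of_le₀ hbl hl.le)
  have hprod : ∫ x in (0:ℝ)..arcsin (b / l), l * cos x * (l * sin x) = b ^ 2 / 2 := by
    simp_rw [show ∀ x, l * cos x * (l * sin x) = l ^ 2 * (sin x * cos x) from fun x => by ring]
    rw [intervalIntegral.integral_const_mul, integral_sin_mul_cos₁, hsin, sin_zero]
    field_simp
    ring
  rw [AB2, integral_min_mul_abs_cos_eq hl.le hla (fun x => by rw [sin_pi_sub]) (by fun_prop),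
    hsplit, hprod, intervalIntegral.integral_const_mul, integral_cos, sin_pi_div_two, hsin]
  field_simp
  ring

theorem stmt6 (l a b : ℝ) (hb : 0 < b) (hbl : b < l) (hla : l ≤ a) :
    P2 l a b = 1 / π * (b / a)
      + 2 / π * (l / b) * (1 - Real.sqrt (1 - b ^ 2 / l ^ 2))
      + 2 / π * (π / 2 - Real.arcsin (b / l)) := by
  have hl : 0 < l := hb.trans hbl
  have ha : 0 < a := hl.trans_le hla
  rw [P2, A2_eq hl.le hla, B2_eq hb.le hbl.le hl, AB2_eq hb.le hbl.le hl hla]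
  field_simp
  ring
end

section
/- For real numbers l, a, b with 0 < l ≤ b ≤ a, one has S³ᴰ(l,a,b) = 2lb + 2la − (π/4)·l²; equivalently, the 3D needle intersection probability P³ᴰ(l,a,b) = S³ᴰ(l,a,b)/(a·b·π²/2) equals (4/π²)·(l/a + l/b) − (1/(2π))·l²/(ab). -/
open Real MeasureTheory Filter

/-
Since `l ≤ b ≤ a` and `sin ψ, |cos φ|, sin φ ≤ 1` on the domain of integration, none of the
minima in `A³ᴰ`, `B³ᴰ`, `AB³ᴰ` is ever cut off at the grid spacing, so each integrand is just the
product of the projected needle components. The double integrals then factor into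
`∫ sin ψ = 1`, `∫ sin² ψ = π/4` over `[0, π/2]` and `∫ |cos φ| = 2`, `∫ sin φ = 2`,
`∫ sin φ |cos φ| = 1` over `[0, π]`.
-/

lemma integral_mul_abs_cos_zero_pi {f : ℝ → ℝ} (hf : Continuous f) :
    ∫ x in (0:ℝ)..π, f x * |cos x|
      = (∫ x in (0:ℝ)..(π/2), f x * cos x) - ∫ x in (π/2)..π, f x * cos x := by
  have hint : ∀ u v : ℝ, IntervalIntegrable (fun x => f x * |cos x|) volume u v :=
    fun u v => (hf.mul continuous_cos.abs).intervalIntegrable u v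
  rw [← intervalIntegral.integral_add_adjacent_intervals (hint 0 (π/2)) (hint (π/2) π),
    sub_eq_add_neg, ← intervalIntegral.integral_neg]
  congr 1
  · refine intervalIntegral.integral_congr fun x hx => ?_
    rw [Set.uIcc_of_le (by positivity)] at hx
    simp only [abs_of_nonneg (cos_nonneg_of_mem_Icc ⟨by linarith [hx.1, pi_pos], hx.2⟩)]
  · refine intervalIntegral.integral_congr fun x hx => ?_
    rw [Set.uIcc_of_le (by linarith [pi_pos])] at hx
    simp only [abs_of_nonpos (cos_nonpos_of_pi_div_two_le_of_le hx.1 (by linarith [hx.2, pi_pos])),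
      mul_neg]

lemma integral_abs_cos_zero_pi : ∫ x in (0:ℝ)..π, |cos x| = 2 := by
  simpa [one_add_one_eq_two] using
    integral_mul_abs_cos_zero_pi (f := fun _ => (1:ℝ)) continuous_const

lemma integral_sin_mul_abs_cos_zero_pi : ∫ x in (0:ℝ)..π, sin x * |cos x| = 1 := by
  rw [integral_mul_abs_cos_zero_pi continuous_sin, integral_sin_mul_cos₁, integral_sin_mul_cos₁]
  norm_num

lemma min_mul_mul_eq_right {l s c a : ℝ} (hl : 0 ≤ l) (hs : s ∈ Set.Icc (0:ℝ) 1) (hc : c ≤ 1)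
    (hla : l ≤ a) : min a (l * s * c) = l * s * c :=
  min_eq_right <| calc
    l * s * c ≤ l * s := mul_le_of_le_one_right (mul_nonneg hl hs.1) hc
    _ ≤ l := mul_le_of_le_one_right hl hs.2
    _ ≤ a := hla

lemma sin_mem_Icc_of_mem_uIcc {ψ : ℝ} (hψ : ψ ∈ Set.uIcc 0 (π/2)) : sin ψ ∈ Set.Icc (0:ℝ) 1 := by
  rw [Set.uIcc_of_le (by positivity)] at hψ
  exact ⟨sin_nonneg_of_nonneg_of_le_pi hψ.1 (by linarith [hψ.2, pi_pos]), sin_le_one ψ⟩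

section

variable {l a b : ℝ}

lemma A3_eq_of_le (hl : 0 ≤ l) (hla : l ≤ a) : A3 l a = 2 * l := by
  calc A3 l a = ∫ ψ in (0:ℝ)..(π/2), 2 * l * sin ψ := by
        refine intervalIntegral.integral_congr fun ψ hψ => ?_
        simp only [min_mul_mul_eq_right hl (sin_mem_Icc_of_mem_uIcc hψ) (abs_cos_le_one _) hla,
          intervalIntegral.integral_const_mul, integral_abs_cos_zero_pi]
        ring
    _ = 2 * l := by simp [integral_sin]

lemma B3_eq_of_le (hl : 0 ≤ l) (hlb : l ≤ b) : B3 l b = 2 * l := by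
  calc B3 l b = ∫ ψ in (0:ℝ)..(π/2), 2 * l * sin ψ := by
        refine intervalIntegral.integral_congr fun ψ hψ => ?_
        simp only [min_mul_mul_eq_right hl (sin_mem_Icc_of_mem_uIcc hψ) (sin_le_one _) hlb,
          intervalIntegral.integral_const_mul, integral_sin, cos_zero, cos_pi]
        ring
    _ = 2 * l := by simp [integral_sin]

lemma AB3_eq_of_le (hl : 0 ≤ l) (hla : l ≤ a) (hlb : l ≤ b) : AB3 l a b = π / 4 * l ^ 2 := by
  calc AB3 l a b = ∫ ψ in (0:ℝ)..(π/2), l ^ 2 * sin ψ ^ 2 := by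
        refine intervalIntegral.integral_congr fun ψ hψ => ?_
        have hs := sin_mem_Icc_of_mem_uIcc hψ
        simp only [min_mul_mul_eq_right hl hs (abs_cos_le_one _) hla,
          min_mul_mul_eq_right hl hs (sin_le_one _) hlb]
        calc _ = ∫ φ in (0:ℝ)..π, l ^ 2 * sin ψ ^ 2 * (sin φ * |cos φ|) := by
              congr 1; ext φ; ring
          _ = _ := by rw [intervalIntegral.integral_const_mul, integral_sin_mul_abs_cos_zero_pi,
              mul_one]
    _ = π / 4 * l ^ 2 := by
        rw [intervalIntegral.integral_const_mul, integral_sin_sq]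
        simp only [sin_zero, cos_zero, sin_pi_div_two, cos_pi_div_two]
        ring

lemma S3_eq_of_le (hl : 0 ≤ l) (hlb : l ≤ b) (hba : b ≤ a) :
    S3 l a b = 2 * l * b + 2 * l * a - π / 4 * l ^ 2 := by
  have hla := hlb.trans hba
  rw [S3, A3_eq_of_le hl hla, B3_eq_of_le hl hlb, AB3_eq_of_le hl hla hlb]
  ring

end

theorem stmt15 (l a b : ℝ) (hl : 0 < l) (hlb : l ≤ b) (hba : b ≤ a) :
    S3 l a b = 2 * l * b + 2 * l * a - π / 4 * l ^ 2
      ∧ S3 l a b / (a * b * π ^ 2 / 2)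
        = 4 / π ^ 2 * (l / a + l / b) - 1 / (2 * π) * (l ^ 2 / (a * b)) := by
  have hS := S3_eq_of_le hl.le hlb hba
  have hb : 0 < b := hl.trans_le hlb
  have ha : 0 < a := hb.trans_le hba
  refine ⟨hS, ?_⟩
  rw [hS]
  field_simp
  ring
end

section
/- For real numbers l, a, b with 0 < b ≤ a < l ≤ √(a² + b²), one has S³ᴰ(l,a,b) = [2lb − 2lb·F(arcsin(a/l), π/2, a/l) + 2ab·G(arcsin(a/l), π/2, a/l)] + [2la − 2la·F(arcsin(b/l), π/2, b/l) + 2ab·G(arcsin(b/l), π/2, b/l)] − [(l²/2)·arcsin(a/l) + (3/2)·la·√(1 − a²/l²) − a²·(π/2 − arcsin(a/l))] − [(l²/2)·arcsin(b/l) + (3/2)·lb·√(1 − b²/l²) − b²·(π/2 − arcsin(b/l))] + (π/4)·l². -/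
open Real MeasureTheory Filter

/-!
The φ-integrals are the planar Buffon–Laplace integrals of a needle of length `L = l sin ψ`.
Both `|cos|` and `sin` are symmetric about `π / 2`, and `φ ↦ π / 2 - φ` swaps `cos` and `sin`
on `[0, π / 2]`; so the inner integrals of `A³ᴰ` and `B³ᴰ` coincide, and each inner integral is
twice one over `[0, π / 2]`, which splits at `arcsin (c / L)`.
For the product term, `L ≤ √(a² + b²)` forbids `L cos φ > a` and `L sin φ > b` at the same time,
so `min a x * min b y = x y - (x - a)⁺ y - x (y - b)⁺` with `x = L cos φ`, `y = L sin φ`, and this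
integrates to `L² - (L - a)⁺² - (L - b)⁺²`.
The ψ-integrals finally split at `arcsin (c / l)`: below it `l sin ψ ≤ c` and all corrections
vanish, above it they are the integrands of `F` and `G`.
-/

open intervalIntegral Set

lemma arcsin_sqrt_sq_sub_sq_div {s t : ℝ} (ht : 0 ≤ t) (hs : 0 < s) :
    arcsin (√(s ^ 2 - t ^ 2) / s) = π / 2 - arcsin (t / s) := by
  have h : √(s ^ 2 - t ^ 2) / s = √(1 - (t / s) ^ 2) := by
    rw [div_pow, one_sub_div (by positivity), sqrt_div' _ (by positivity), sqrt_sq hs.le]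
  rw [h, ← arccos_eq_arcsin (by positivity), arccos_eq_pi_div_two_sub_arcsin]

lemma sqrt_mul_sq_sub_sq {l s c : ℝ} (hl : 0 < l) :
    √((l * s) ^ 2 - c ^ 2) = l * √(s ^ 2 - (c / l) ^ 2) := by
  rw [show (l * s) ^ 2 - c ^ 2 = l ^ 2 * (s ^ 2 - (c / l) ^ 2) by field_simp,
    sqrt_mul (sq_nonneg l), sqrt_sq hl.le]

lemma sin_le_of_le_arcsin {x φ : ℝ} (hφ : -(π / 2) < φ) (h : φ ≤ arcsin x) :
    sin φ ≤ x :=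
  (le_arcsin_iff_sin_le' ⟨hφ, h.trans (arcsin_le_pi_div_two x)⟩).1 h

lemma le_sin_of_arcsin_le {x φ : ℝ} (hx : x ≤ 1) (h : arcsin x ≤ φ) (hφ : φ ≤ π / 2) :
    x ≤ sin φ := by
  rcases lt_or_ge x (-1) with hx' | hx'
  · linarith [neg_one_le_sin φ]
  · exact (arcsin_le_iff_le_sin ⟨hx', hx⟩ ⟨(neg_pi_div_two_le_arcsin x).trans h, hφ⟩).1 h

lemma mul_sin_le_of_le_arcsin_s17 {L c φ : ℝ} (hL : 0 < L) (hφ : 0 ≤ φ)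
    (h : φ ≤ arcsin (c / L)) : L * sin φ ≤ c :=
  (le_div_iff₀' hL).1 (sin_le_of_le_arcsin (by linarith [pi_pos]) h)

lemma le_mul_sin_of_arcsin_le_s17 {L c φ : ℝ} (hL : 0 < L) (hcL : c ≤ L)
    (h : arcsin (c / L) ≤ φ) (hφ : φ ≤ π / 2) : c ≤ L * sin φ :=
  (div_le_iff₀' hL).1 (le_sin_of_arcsin_le ((div_le_one hL).2 hcL) h hφ)

lemma abs_cos_eq_cos_of_mem_uIcc {φ : ℝ} (hφ : φ ∈ uIcc 0 (π / 2)) : |cos φ| = cos φ := by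
  rw [uIcc_of_le (by positivity)] at hφ
  exact abs_of_nonneg (cos_nonneg_of_mem_Icc ⟨by linarith [pi_pos, hφ.1], hφ.2⟩)

lemma integral_eq_add_of_eqOn {f g h : ℝ → ℝ} {a b c : ℝ} (hab : a ≤ b) (hbc : b ≤ c)
    (hf : IntervalIntegrable f volume a c) (hg : EqOn f g (Icc a b)) (hh : EqOn f h (Icc b c)) :
    ∫ x in a..c, f x = (∫ x in a..b, g x) + ∫ x in b..c, h x := by
  have hb : b ∈ uIcc a c := by rw [uIcc_of_le (hab.trans hbc)]; exact ⟨hab, hbc⟩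
  rw [← integral_add_adjacent_intervals (hf.mono_set (uIcc_subset_uIcc_left hb))
      (hf.mono_set (uIcc_subset_uIcc_right hb)),
    integral_congr (a := a) (b := b) (g := g) (by rwa [uIcc_of_le hab]),
    integral_congr (a := b) (b := c) (g := h) (by rwa [uIcc_of_le hbc])]

lemma integral_eq_two_mul_integral_half {f : ℝ → ℝ} {T : ℝ} (hf : Continuous f)
    (hsymm : ∀ x, f (T - x) = f x) : ∫ x in 0..T, f x = 2 * ∫ x in 0..T / 2, f x := by
  have hreflect : ∫ x in T / 2..T, f x = ∫ x in 0..T / 2, f x := by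
    simpa [hsymm, show T - T / 2 = T / 2 by ring] using
      (integral_comp_sub_left f T (a := 0) (b := T / 2)).symm
  rw [← integral_add_adjacent_intervals (b := T / 2) (hf.intervalIntegrable _ _)
    (hf.intervalIntegrable _ _), hreflect, two_mul]

lemma integral_cos_sin_swap (h : ℝ → ℝ → ℝ) :
    ∫ x in 0..π / 2, h (cos x) (sin x) = ∫ x in 0..π / 2, h (sin x) (cos x) := by
  simpa [sin_pi_div_two_sub, cos_pi_div_two_sub] using
    integral_comp_sub_left (fun x => h (sin x) (cos x)) (π / 2) (a := 0) (b := π / 2)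

lemma intervalIntegrable_arcsin_comp {f : ℝ → ℝ} (hf : Measurable f) (a b : ℝ) :
    IntervalIntegrable (fun x => arcsin (f x)) volume a b := by
  rw [intervalIntegrable_iff]
  refine Measure.integrableOn_of_bounded measure_Ioc_lt_top.ne
    (continuous_arcsin.measurable.comp hf).aestronglyMeasurable (M := π / 2) (ae_of_all _ ?_)
  intro x
  rw [norm_eq_abs, abs_le]
  exact ⟨neg_pi_div_two_le_arcsin _, arcsin_le_pi_div_two _⟩

lemma min_mul_min_eq_of_sq_add_sq_le {a b x y : ℝ} (ha : 0 ≤ a) (hb : 0 ≤ b)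
    (h : x ^ 2 + y ^ 2 ≤ a ^ 2 + b ^ 2) :
    min a x * min b y = x * y - max (x - a) 0 * y - x * max (y - b) 0 := by
  rcases le_total x a with hx | hx <;> rcases le_total y b with hy | hy
  · rw [min_eq_right hx, min_eq_right hy, max_eq_right (by linarith), max_eq_right (by linarith)]
    ring
  · rw [min_eq_right hx, min_eq_left hy, max_eq_right (by linarith), max_eq_left (by linarith)]
    ring
  · rw [min_eq_left hx, min_eq_right hy, max_eq_left (by linarith), max_eq_right (by linarith)]
    ring
  · have hsq : (x - a) ^ 2 + (y - b) ^ 2 ≤ 0 := by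
      nlinarith [mul_nonneg (sub_nonneg.2 hx) ha, mul_nonneg (sub_nonneg.2 hy) hb]
    obtain rfl : x = a := by nlinarith
    obtain rfl : y = b := by nlinarith
    simp

-- For `L ≤ c` the correction terms vanish because `√` of a negative number is `0`; unlike
-- `π / 2 - arcsin (c / L)`, this form is also correct at `L = 0`.
lemma integral_zero_pi_div_two_min_mul_sin {c L : ℝ} (hc : 0 ≤ c) (hL : 0 ≤ L) :
    ∫ φ in 0..π / 2, min c (L * sin φ)
      = L - √(L ^ 2 - c ^ 2) + c * arcsin (√(L ^ 2 - c ^ 2) / L) := by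
  rcases le_or_gt L c with hLc | hcL
  · have hsqrt : √(L ^ 2 - c ^ 2) = 0 := sqrt_eq_zero'.2 (by nlinarith)
    rw [hsqrt, zero_div, arcsin_zero, integral_congr (g := fun φ => L * sin φ)
        (fun φ _ => min_eq_right (by nlinarith [sin_le_one φ])),
      intervalIntegral.integral_const_mul, integral_sin]
    simp
  · have hL0 : 0 < L := hc.trans_lt hcL
    have hθ0 : 0 ≤ arcsin (c / L) := arcsin_nonneg.2 (by positivity)
    have hcos : L * cos (arcsin (c / L)) = √(L ^ 2 - c ^ 2) := by
      simpa [cos_arcsin] using (sqrt_mul_sq_sub_sq (s := 1) (c := c) hL0).symm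
    rw [integral_eq_add_of_eqOn hθ0 (arcsin_le_pi_div_two _)
        ((by fun_prop : Continuous _).intervalIntegrable _ _)
        (g := fun φ => L * sin φ) (h := fun _ => c)
        (fun φ hφ => min_eq_right (mul_sin_le_of_le_arcsin_s17 hL0 hφ.1 hφ.2))
        (fun φ hφ => min_eq_left (le_mul_sin_of_arcsin_le_s17 hL0 hcL.le hφ.1 hφ.2)),
      intervalIntegral.integral_const_mul, integral_sin, intervalIntegral.integral_const,
      arcsin_sqrt_sq_sub_sq_div hc hL0, ← hcos]
    simp only [cos_zero, smul_eq_mul]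
    ring

lemma integral_zero_pi_div_two_max_mul_sin_sub_mul_cos {c L : ℝ} (hc : 0 ≤ c) (hL : 0 ≤ L) :
    ∫ φ in 0..π / 2, max (L * sin φ - c) 0 * (L * cos φ) = max (L - c) 0 ^ 2 / 2 := by
  rcases le_or_gt L c with hLc | hcL
  · rw [max_eq_right (by linarith), integral_congr (g := fun _ => 0) (fun φ _ => by
      simp only [max_eq_right (by nlinarith [sin_le_one φ] : L * sin φ - c ≤ 0), zero_mul])]
    simp
  · have hL0 : 0 < L := hc.trans_lt hcL
    have hθ0 : 0 ≤ arcsin (c / L) := arcsin_nonneg.2 (by positivity)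
    have hsin : sin (arcsin (c / L)) = c / L :=
      sin_arcsin (by linarith [div_nonneg hc hL]) ((div_le_one hL0).2 hcL.le)
    have hcont : Continuous fun φ => L ^ 2 * (sin φ * cos φ) := by fun_prop
    rw [integral_eq_add_of_eqOn hθ0 (arcsin_le_pi_div_two _)
        ((by fun_prop : Continuous _).intervalIntegrable _ _)
        (g := fun _ => 0) (h := fun φ => L ^ 2 * (sin φ * cos φ) - c * L * cos φ)
        (fun φ hφ => by
          simp only [max_eq_right (sub_nonpos.2 (mul_sin_le_of_le_arcsin_s17 hL0 hφ.1 hφ.2)),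
            zero_mul])
        (fun φ hφ => by
          simp only [max_eq_left (sub_nonneg.2 (le_mul_sin_of_arcsin_le_s17 hL0 hcL.le hφ.1 hφ.2))]
          ring),
      intervalIntegral.integral_sub (hcont.intervalIntegrable _ _)
        ((by fun_prop : Continuous _).intervalIntegrable _ _),
      intervalIntegral.integral_const_mul, intervalIntegral.integral_const_mul,
      integral_sin_mul_cos₁, integral_cos, hsin, max_eq_left (by linarith)]
    field_simp
    simp only [intervalIntegral.integral_zero, zero_mul, sin_pi_div_two, one_pow, mul_one, zero_add]
    ring

lemma integral_zero_pi_div_two_min_mul_cos_mul_min_mul_sin {a b L : ℝ} (ha : 0 ≤ a)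
    (hb : 0 ≤ b) (hL : 0 ≤ L) (hLab : L ^ 2 ≤ a ^ 2 + b ^ 2) :
    ∫ φ in 0..π / 2, min a (L * cos φ) * min b (L * sin φ)
      = (L ^ 2 - max (L - a) 0 ^ 2 - max (L - b) 0 ^ 2) / 2 := by
  have hpointwise (φ : ℝ) : min a (L * cos φ) * min b (L * sin φ)
      = L ^ 2 * (sin φ * cos φ) - max (L * cos φ - a) 0 * (L * sin φ)
        - max (L * sin φ - b) 0 * (L * cos φ) := by
    rw [min_mul_min_eq_of_sq_add_sq_le ha hb (by nlinarith [sin_sq_add_cos_sq φ])]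
    ring
  have hswap := integral_cos_sin_swap (fun u v => max (L * u - a) 0 * (L * v))
  simp only [hpointwise]
  rw [intervalIntegral.integral_sub, intervalIntegral.integral_sub,
    intervalIntegral.integral_const_mul, integral_sin_mul_cos₁, hswap,
    integral_zero_pi_div_two_max_mul_sin_sub_mul_cos ha hL,
    integral_zero_pi_div_two_max_mul_sin_sub_mul_cos hb hL]
  · simp only [sin_pi_div_two, sin_zero, one_pow, ne_eq, OfNat.ofNat_ne_zero, not_false_eq_true,
      zero_pow, sub_zero, one_div]
    ring
  all_goals exact (by fun_prop : Continuous _).intervalIntegrable _ _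

lemma integral_min_mul_abs_cos_eq_integral_min_mul_sin (c L : ℝ) :
    ∫ φ in 0..π, min c (L * |cos φ|) = ∫ φ in 0..π, min c (L * sin φ) := by
  rw [integral_eq_two_mul_integral_half (by fun_prop) (fun φ => by rw [cos_pi_sub, abs_neg]),
    integral_eq_two_mul_integral_half (T := π) (f := fun φ => min c (L * sin φ)) (by fun_prop)
      (fun φ => by rw [sin_pi_sub]),
    integral_congr (g := fun φ => min c (L * cos φ))
      (fun φ hφ => by simp only [abs_cos_eq_cos_of_mem_uIcc hφ]),
    integral_cos_sin_swap (fun u _ => min c (L * u))]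

lemma integral_min_mul_sin {c L : ℝ} (hc : 0 ≤ c) (hL : 0 ≤ L) :
    ∫ φ in 0..π, min c (L * sin φ)
      = 2 * (L - √(L ^ 2 - c ^ 2) + c * arcsin (√(L ^ 2 - c ^ 2) / L)) := by
  rw [integral_eq_two_mul_integral_half (by fun_prop) (fun φ => by rw [sin_pi_sub]),
    integral_zero_pi_div_two_min_mul_sin hc hL]

lemma integral_min_mul_abs_cos_mul_min_mul_sin {a b L : ℝ} (ha : 0 ≤ a) (hb : 0 ≤ b)
    (hL : 0 ≤ L) (hLab : L ^ 2 ≤ a ^ 2 + b ^ 2) :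
    ∫ φ in 0..π, min a (L * |cos φ|) * min b (L * sin φ)
      = L ^ 2 - max (L - a) 0 ^ 2 - max (L - b) 0 ^ 2 := by
  rw [integral_eq_two_mul_integral_half (by fun_prop)
      (fun φ => by rw [cos_pi_sub, abs_neg, sin_pi_sub]),
    integral_congr (g := fun φ => min a (L * cos φ) * min b (L * sin φ))
      (fun φ hφ => by simp only [abs_cos_eq_cos_of_mem_uIcc hφ]),
    integral_zero_pi_div_two_min_mul_cos_mul_min_mul_sin ha hb hL hLab]
  ring

lemma sqrt_sin_sq_sub_sq_eq_zero {t ψ : ℝ} (hψ : ψ ∈ Icc 0 (arcsin t)) :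
    √(sin ψ ^ 2 - t ^ 2) = 0 := by
  have hsin := sin_le_of_le_arcsin (by linarith [pi_pos, hψ.1]) hψ.2
  have hsin0 := sin_nonneg_of_nonneg_of_le_pi hψ.1
    (by linarith [hψ.2, arcsin_le_pi_div_two t, pi_pos])
  exact sqrt_eq_zero'.2 (by nlinarith)

lemma integral_sqrt_sin_sq_sub_sq {t : ℝ} (ht : 0 ≤ t) :
    ∫ ψ in 0..π / 2, √(sin ψ ^ 2 - t ^ 2) = Faux (arcsin t) (π / 2) t := by
  rw [integral_eq_add_of_eqOn (arcsin_nonneg.2 ht) (arcsin_le_pi_div_two t)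
    ((by fun_prop : Continuous _).intervalIntegrable _ _) (g := fun _ => 0)
    (h := fun ψ => √(sin ψ ^ 2 - t ^ 2)) (fun _ hψ => sqrt_sin_sq_sub_sq_eq_zero hψ)
    (fun _ _ => rfl)]
  simp [Faux]

lemma integral_arcsin_sqrt_sin_sq_sub_sq_div_sin {t : ℝ} (ht0 : 0 < t) (ht1 : t ≤ 1) :
    ∫ ψ in 0..π / 2, arcsin (√(sin ψ ^ 2 - t ^ 2) / sin ψ)
      = Gaux (arcsin t) (π / 2) t := by
  rw [integral_eq_add_of_eqOn (arcsin_nonneg.2 ht0.le) (arcsin_le_pi_div_two t)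
    (intervalIntegrable_arcsin_comp (by fun_prop) _ _) (g := fun _ => 0)
    (h := fun ψ => π / 2 - arcsin (t / sin ψ))
    (fun _ hψ => by simp only [sqrt_sin_sq_sub_sq_eq_zero hψ, zero_div, arcsin_zero])
    (fun _ hψ => arcsin_sqrt_sq_sub_sq_div ht0.le
      (ht0.trans_le (le_sin_of_arcsin_le ht1 hψ.1 hψ.2)))]
  simp [Gaux]

lemma integral_max_mul_sin_sub_sq {c l : ℝ} (hc : 0 ≤ c) (hcl : c < l) :
    ∫ ψ in 0..π / 2, max (l * sin ψ - c) 0 ^ 2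
      = (l ^ 2 / 2 + c ^ 2) * (π / 2 - arcsin (c / l))
        - 3 / 2 * (l * c) * √(1 - c ^ 2 / l ^ 2) := by
  have hl : 0 < l := hc.trans_lt hcl
  have hθ0 : 0 ≤ arcsin (c / l) := arcsin_nonneg.2 (by positivity)
  have hsin : sin (arcsin (c / l)) = c / l :=
    sin_arcsin (by linarith [div_nonneg hc hl.le]) ((div_le_one hl).2 hcl.le)
  rw [integral_eq_add_of_eqOn hθ0 (arcsin_le_pi_div_two _)
      ((by fun_prop : Continuous _).intervalIntegrable _ _)
      (g := fun _ => 0) (h := fun ψ => l ^ 2 * sin ψ ^ 2 - 2 * c * l * sin ψ + c ^ 2)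
      (fun ψ hψ => by
        simp only [max_eq_right (sub_nonpos.2 (mul_sin_le_of_le_arcsin_s17 hl hψ.1 hψ.2))]
        ring)
      (fun ψ hψ => by
        simp only [max_eq_left (sub_nonneg.2 (le_mul_sin_of_arcsin_le_s17 hl hcl.le hψ.1 hψ.2))]
        ring),
    intervalIntegral.integral_add, intervalIntegral.integral_sub,
    intervalIntegral.integral_const_mul, intervalIntegral.integral_const_mul, integral_sin_sq,
    integral_sin, intervalIntegral.integral_const, hsin, cos_arcsin, div_pow]
  · simp only [sub_zero, smul_eq_mul, mul_zero, sin_pi_div_two, cos_pi_div_two,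
      intervalIntegral.integral_const, zero_add]
    field_simp
    ring
  all_goals exact (by fun_prop : Continuous _).intervalIntegrable _ _

lemma A3_eq_B3 (l c : ℝ) : A3 l c = B3 l c := by
  unfold A3 B3
  congr 1
  funext ψ
  exact integral_min_mul_abs_cos_eq_integral_min_mul_sin c (l * sin ψ)

lemma B3_eq {c l : ℝ} (hc : 0 < c) (hcl : c < l) :
    B3 l c = 2 * l - 2 * l * Faux (arcsin (c / l)) (π / 2) (c / l)
      + 2 * c * Gaux (arcsin (c / l)) (π / 2) (c / l) := by
  have hl : 0 < l := hc.trans hcl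
  have hinner : EqOn (fun ψ => ∫ φ in 0..π, min c (l * sin ψ * sin φ))
      (fun ψ => 2 * (l * sin ψ - l * √(sin ψ ^ 2 - (c / l) ^ 2)
        + c * arcsin (√(sin ψ ^ 2 - (c / l) ^ 2) / sin ψ))) (uIcc 0 (π / 2)) := by
    intro ψ hψ
    rw [uIcc_of_le (by positivity)] at hψ
    have hsin := sin_nonneg_of_nonneg_of_le_pi hψ.1 (by linarith [hψ.2, pi_pos])
    dsimp only
    rw [integral_min_mul_sin hc.le (mul_nonneg hl.le hsin), sqrt_mul_sq_sub_sq hl,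
      mul_div_mul_left _ _ hl.ne']
  rw [B3, integral_congr hinner, intervalIntegral.integral_const_mul,
    intervalIntegral.integral_add, intervalIntegral.integral_sub,
    intervalIntegral.integral_const_mul, intervalIntegral.integral_const_mul,
    intervalIntegral.integral_const_mul, integral_sin, integral_sqrt_sin_sq_sub_sq (by positivity),
    integral_arcsin_sqrt_sin_sq_sub_sq_div_sin (by positivity) ((div_le_one hl).2 hcl.le)]
  · simp only [cos_zero, cos_pi_div_two, sub_zero, mul_one]
    ring
  all_goals first
    | exact (by fun_prop : Continuous _).intervalIntegrable _ _
    | exact (intervalIntegrable_arcsin_comp (by fun_prop) _ _).const_mul _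

lemma AB3_eq {a b l : ℝ} (ha : 0 ≤ a) (hb : 0 ≤ b) (hal : a < l) (hbl : b < l)
    (hlab : l ^ 2 ≤ a ^ 2 + b ^ 2) :
    AB3 l a b = π / 4 * l ^ 2
      - ((l ^ 2 / 2 + a ^ 2) * (π / 2 - arcsin (a / l)) - 3 / 2 * (l * a) * √(1 - a ^ 2 / l ^ 2))
      - ((l ^ 2 / 2 + b ^ 2) * (π / 2 - arcsin (b / l))
          - 3 / 2 * (l * b) * √(1 - b ^ 2 / l ^ 2)) := by
  have hl : 0 < l := ha.trans_lt hal
  have hinner : EqOn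
      (fun ψ => ∫ φ in 0..π, min a (l * sin ψ * |cos φ|) * min b (l * sin ψ * sin φ))
      (fun ψ => l ^ 2 * sin ψ ^ 2 - max (l * sin ψ - a) 0 ^ 2 - max (l * sin ψ - b) 0 ^ 2)
      (uIcc 0 (π / 2)) := by
    intro ψ hψ
    rw [uIcc_of_le (by positivity)] at hψ
    have hsin := sin_nonneg_of_nonneg_of_le_pi hψ.1 (by linarith [hψ.2, pi_pos])
    dsimp only
    rw [integral_min_mul_abs_cos_mul_min_mul_sin ha hb (mul_nonneg hl.le hsin)
      (by nlinarith [sin_sq_le_one ψ]), mul_pow]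
  rw [AB3, integral_congr hinner, intervalIntegral.integral_sub, intervalIntegral.integral_sub,
    intervalIntegral.integral_const_mul, integral_sin_sq, integral_max_mul_sin_sub_sq ha hal,
    integral_max_mul_sin_sub_sq hb hbl]
  · simp only [sin_zero, cos_zero, mul_one, sin_pi_div_two, cos_pi_div_two, mul_zero, sub_self,
      zero_add, sub_zero, sub_left_inj]
    ring
  all_goals exact (by fun_prop : Continuous _).intervalIntegrable _ _

theorem stmt17 (l a b : ℝ) (hb : 0 < b) (hba : b ≤ a) (hal : a < l)
    (hlL : l ≤ Real.sqrt (a ^ 2 + b ^ 2)) :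
    S3 l a b
      = (2 * l * b - 2 * l * b * Faux (Real.arcsin (a / l)) (π / 2) (a / l)
        + 2 * a * b * Gaux (Real.arcsin (a / l)) (π / 2) (a / l))
      + (2 * l * a - 2 * l * a * Faux (Real.arcsin (b / l)) (π / 2) (b / l)
        + 2 * a * b * Gaux (Real.arcsin (b / l)) (π / 2) (b / l))
      - (l ^ 2 / 2 * Real.arcsin (a / l)
        + 3 / 2 * (l * a) * Real.sqrt (1 - a ^ 2 / l ^ 2)
        - a ^ 2 * (π / 2 - Real.arcsin (a / l)))
      - (l ^ 2 / 2 * Real.arcsin (b / l)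
        + 3 / 2 * (l * b) * Real.sqrt (1 - b ^ 2 / l ^ 2)
        - b ^ 2 * (π / 2 - Real.arcsin (b / l)))
      + π / 4 * l ^ 2 := by
  have ha : 0 < a := hb.trans_le hba
  have hbl : b < l := hba.trans_lt hal
  have hlab : l ^ 2 ≤ a ^ 2 + b ^ 2 := (le_sqrt (ha.trans hal).le (by positivity)).1 hlL
  rw [S3, A3_eq_B3, B3_eq ha hal, B3_eq hb hbl, AB3_eq ha.le hb.le hal hbl hlab]
  ring
end
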